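/- arXiv:0905.1309 — 11 statements merged into one kernel-verified Lean document; each statement's English description precedes it below -/
import Mathlib

section
/- Along any solution (m, n, e) of the magnetic rod equations, the quantity C₁ = ½ n·n + λ m·e is constant in t (its derivative vanishes identically). -/
/-!
Differentiating, `C₁' = n·n' + λ (m'·e + m·e')`. After `n·(n × u) = 0`, the equations leave
`λ` times two expressions of the form `(a × b)·c + a·(c × b)`, namely
`(m × u)·e + m·(e × u)` and `(n × w)·e + n·(e × w)`; each vanishes because `x ↦ x × b`
is skew-adjoint for the dot product.
-/

open Matrix

theorem cross_dotProduct_add_dotProduct_cross {R : Type*} [CommRing R] (a b c : Fin 3 → R) :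
    a ⨯₃ b ⬝ᵥ c + a ⬝ᵥ c ⨯₃ b = 0 := by
  rw [dotProduct_comm, triple_product_permutation, ← dotProduct_add, cross_anticomm',
    dotProduct_zero]

theorem HasDerivAt.dotProduct {𝕜 ι : Type*} [NontriviallyNormedField 𝕜] [Fintype ι]
    {f g : 𝕜 → ι → 𝕜} {f' g' : ι → 𝕜} {t : 𝕜}
    (hf : HasDerivAt f f' t) (hg : HasDerivAt g g' t) :
    HasDerivAt (fun s => f s ⬝ᵥ g s) (f' ⬝ᵥ g t + f t ⬝ᵥ g') t := by
  rw [hasDerivAt_pi] at hf hg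
  unfold _root_.dotProduct
  rw [← Finset.sum_add_distrib]
  exact HasDerivAt.fun_sum (u := Finset.univ) fun i _ => (hf i).fun_mul (hg i)

theorem magneticRod_C1_rate_eq_zero {R : Type*} [CommRing R] (lam : R)
    (m n e u w : Fin 3 → R) :
    n ⬝ᵥ (n ⨯₃ u + lam • e ⨯₃ w) + lam * ((m ⨯₃ u + n ⨯₃ w) ⬝ᵥ e + m ⬝ᵥ e ⨯₃ u) = 0 := by
  have hm := cross_dotProduct_add_dotProduct_cross m u e
  have hn := cross_dotProduct_add_dotProduct_cross n w e
  rw [dotProduct_add, dotProduct_smul, dot_self_cross, add_dotProduct, smul_eq_mul]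
  linear_combination lam * hm + lam * hn

theorem casimir_C1_conserved_general
    (lam : ℝ)
    (m n e : ℝ → Fin 3 → ℝ)
    (hm : Differentiable ℝ m) (hn : Differentiable ℝ n) (he : Differentiable ℝ e)
    (u : ℝ → Fin 3 → ℝ)
    (w : ℝ → Fin 3 → ℝ)
    (heqm : ∀ t, deriv m t = m t ⨯₃ u t + n t ⨯₃ w t)
    (heqn : ∀ t, deriv n t = n t ⨯₃ u t + lam • (e t ⨯₃ w t))
    (heqe : ∀ t, deriv e t = e t ⨯₃ u t) :
    ∀ t, deriv (fun t => (1 / 2) * (n t ⬝ᵥ n t) + lam * (m t ⬝ᵥ e t)) t = 0 := by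
  intro t
  have hnn := (hn t).hasDerivAt.dotProduct (hn t).hasDerivAt
  have hme := (hm t).hasDerivAt.dotProduct (he t).hasDerivAt
  rw [((hnn.const_mul (1 / 2)).fun_add (hme.const_mul lam)).deriv, heqm, heqn, heqe,
    dotProduct_comm (_ + _) (n t)]
  linear_combination magneticRod_C1_rate_eq_zero lam (m t) (n t) (e t) (u t) (w t)

/-- Along any solution `(m, n, e)` of the magnetic rod equations,
the Casimir `C₁ = ½ n·n + λ m·e` is constant in `t`: its derivative vanishes identically. -/
theorem casimir_C1_conserved
    (B₁ B₂ C H J K lam : ℝ)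
    (hB₁ : 0 < B₁) (hB₂ : 0 < B₂) (hC : 0 < C) (hH : 0 < H) (hJ : 0 < J) (hK : 0 < K)
    (m n e : ℝ → Fin 3 → ℝ)
    (hm : Differentiable ℝ m) (hn : Differentiable ℝ n) (he : Differentiable ℝ e)
    (u : ℝ → Fin 3 → ℝ) (hu : ∀ t, u t = ![m t 0 / B₁, m t 1 / B₂, m t 2 / C])
    (w : ℝ → Fin 3 → ℝ) (hw : ∀ t, w t = ![n t 0 / H, n t 1 / J, 1 + n t 2 / K])
    (heqm : ∀ t, deriv m t = m t ⨯₃ u t + n t ⨯₃ w t)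
    (heqn : ∀ t, deriv n t = n t ⨯₃ u t + lam • (e t ⨯₃ w t))
    (heqe : ∀ t, deriv e t = e t ⨯₃ u t) :
    ∀ t, deriv (fun t => (1 / 2) * (n t ⬝ᵥ n t) + lam * (m t ⬝ᵥ e t)) t = 0 :=
  casimir_C1_conserved_general lam m n e hm hn he u w heqm heqn heqe
end

section
/- Along any solution (m, n, e) of the magnetic rod equations, the Hamiltonian ℋ = m₁²/(2B₁) + m₂²/(2B₂) + m₃²/(2C) + n₁²/(2H) + n₂²/(2J) + n₃²/(2K) + n₃ is constant in t (its derivative vanishes identically). -/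
open Matrix Real

/-!
Differentiating the quadratic Hamiltonian along the flow gives `ℋ' = m' ⬝ u + n' ⬝ w`, because
`u` and `w` are exactly its partial gradients in `m` and `n` (the linear term `n₃` accounts for the
`1` in `w₃`). Substituting the rod equations, `(m × u) ⬝ u` and `(e × w) ⬝ w` vanish, and the two
remaining triple products `(n × w) ⬝ u` and `(n × u) ⬝ w` cancel by antisymmetry.
-/

section CrossProduct

variable {R : Type*} [CommRing R]

theorem rodEquations_power_eq_zero (m n e u w : Fin 3 → R) (lam : R) :
    (m ⨯₃ u + n ⨯₃ w) ⬝ᵥ u + (n ⨯₃ u + lam • (e ⨯₃ w)) ⬝ᵥ w = 0 := by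
  have h_mu : m ⨯₃ u ⬝ᵥ u = 0 := by rw [dotProduct_comm, dot_cross_self]
  have h_ew : e ⨯₃ w ⬝ᵥ w = 0 := by rw [dotProduct_comm, dot_cross_self]
  have h_cancel : n ⨯₃ w ⬝ᵥ u + n ⨯₃ u ⬝ᵥ w = 0 := by
    rw [dotProduct_comm (n ⨯₃ w), dotProduct_comm (n ⨯₃ u), triple_product_permutation u,
      triple_product_permutation w, ← dotProduct_add, cross_anticomm', dotProduct_zero]
  rw [add_dotProduct, add_dotProduct, smul_dotProduct, h_mu, h_ew]
  linear_combination h_cancel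

end CrossProduct

theorem HasDerivAt.sq_div_two_mul {f : ℝ → ℝ} {f' t : ℝ} (hf : HasDerivAt f f' t) (a : ℝ) :
    HasDerivAt (fun s => f s ^ 2 / (2 * a)) (f' * (f t / a)) t := by
  refine ((hf.pow 2).div_const (2 * a)).congr_deriv ?_
  ring

theorem hamiltonian_conserved_general
    (B₁ B₂ C H J K lam : ℝ)
    (m n e : ℝ → Fin 3 → ℝ)
    (hm : Differentiable ℝ m) (hn : Differentiable ℝ n)
    (u : ℝ → Fin 3 → ℝ) (hu : ∀ t, u t = ![m t 0 / B₁, m t 1 / B₂, m t 2 / C])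
    (w : ℝ → Fin 3 → ℝ) (hw : ∀ t, w t = ![n t 0 / H, n t 1 / J, 1 + n t 2 / K])
    (heqm : ∀ t, deriv m t = m t ⨯₃ u t + n t ⨯₃ w t)
    (heqn : ∀ t, deriv n t = n t ⨯₃ u t + lam • (e t ⨯₃ w t)) :
    ∀ t, deriv (fun t =>
      (m t 0) ^ 2 / (2 * B₁) + (m t 1) ^ 2 / (2 * B₂) + (m t 2) ^ 2 / (2 * C)
        + (n t 0) ^ 2 / (2 * H) + (n t 1) ^ 2 / (2 * J) + (n t 2) ^ 2 / (2 * K)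
        + n t 2) t = 0 := by
  intro t
  have hmi : ∀ i, HasDerivAt (fun s => m s i) (deriv m t i) t :=
    hasDerivAt_pi.1 (hm t).hasDerivAt
  have hni : ∀ i, HasDerivAt (fun s => n s i) (deriv n t i) t :=
    hasDerivAt_pi.1 (hn t).hasDerivAt
  calc deriv _ t = deriv m t ⬝ᵥ u t + deriv n t ⬝ᵥ w t := by
        refine HasDerivAt.deriv (HasDerivAt.congr_deriv ((((((((hmi 0).sq_div_two_mul B₁).add
          ((hmi 1).sq_div_two_mul B₂)).add ((hmi 2).sq_div_two_mul C)).add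
          ((hni 0).sq_div_two_mul H)).add ((hni 1).sq_div_two_mul J)).add
          ((hni 2).sq_div_two_mul K)).add (hni 2)) ?_)
        simp only [hu, hw, vec3_dotProduct, cons_val_zero, cons_val_one, cons_val_two,
          tail_cons, head_cons]
        ring
    _ = 0 := by rw [heqm, heqn, rodEquations_power_eq_zero]

/-- Along any solution `(m, n, e)` of the magnetic rod equations,
the Hamiltonian `ℋ = m₁²/(2B₁) + m₂²/(2B₂) + m₃²/(2C) + n₁²/(2H) + n₂²/(2J) + n₃²/(2K) + n₃`
is constant in `t`: its derivative vanishes identically. -/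
theorem hamiltonian_conserved
    (B₁ B₂ C H J K lam : ℝ)
    (hB₁ : 0 < B₁) (hB₂ : 0 < B₂) (hC : 0 < C) (hH : 0 < H) (hJ : 0 < J) (hK : 0 < K)
    (m n e : ℝ → Fin 3 → ℝ)
    (hm : Differentiable ℝ m) (hn : Differentiable ℝ n) (he : Differentiable ℝ e)
    (u : ℝ → Fin 3 → ℝ) (hu : ∀ t, u t = ![m t 0 / B₁, m t 1 / B₂, m t 2 / C])
    (w : ℝ → Fin 3 → ℝ) (hw : ∀ t, w t = ![n t 0 / H, n t 1 / J, 1 + n t 2 / K])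
    (heqm : ∀ t, deriv m t = m t ⨯₃ u t + n t ⨯₃ w t)
    (heqn : ∀ t, deriv n t = n t ⨯₃ u t + lam • (e t ⨯₃ w t))
    (heqe : ∀ t, deriv e t = e t ⨯₃ u t) :
    ∀ t, deriv (fun t =>
      (m t 0) ^ 2 / (2 * B₁) + (m t 1) ^ 2 / (2 * B₂) + (m t 2) ^ 2 / (2 * C)
        + (n t 0) ^ 2 / (2 * H) + (n t 1) ^ 2 / (2 * J) + (n t 2) ^ 2 / (2 * K)
        + n t 2) t = 0 :=
  hamiltonian_conserved_general B₁ B₂ C H J K lam m n e hm hn u hu w hw heqm heqn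
end

section
/- If the rod is isotropic, i.e. B₁ = B₂ and H = J, then along any solution (m, n, e) of the magnetic rod equations the twist I₁ = m₃ (the third component of m) is constant in t. -/
open Matrix

/-! The third component of `m' = m × u + n × w` is `m₁ m₂ (1/B₂ - 1/B₁) + n₁ n₂ (1/J - 1/H)`,
so it vanishes for an isotropic rod. -/

theorem cross_scaled_apply_two_eq_zero {R : Type*} [Field R] (v : Fin 3 → R) (b c : R) :
    (v ⨯₃ ![v 0 / b, v 1 / b, c]) 2 = 0 := by
  simp only [cross_apply, Matrix.cons_val]
  ring

theorem twist_conserved_of_isotropic_general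
    (B₁ B₂ C H J K : ℝ)
    (m n : ℝ → Fin 3 → ℝ)
    (hm : Differentiable ℝ m)
    (u : ℝ → Fin 3 → ℝ) (hu : ∀ t, u t = ![m t 0 / B₁, m t 1 / B₂, m t 2 / C])
    (w : ℝ → Fin 3 → ℝ) (hw : ∀ t, w t = ![n t 0 / H, n t 1 / J, 1 + n t 2 / K])
    (heqm : ∀ t, deriv m t = m t ⨯₃ u t + n t ⨯₃ w t)
    (hiso₁ : B₁ = B₂) (hiso₂ : H = J) :
    ∀ t, deriv (fun t => m t 2) t = 0 := by
  intro t
  subst hiso₁ hiso₂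
  rw [(hasDerivAt_pi.mp (hm t).hasDerivAt 2).deriv, heqm t, hu t, hw t, Pi.add_apply,
    cross_scaled_apply_two_eq_zero, cross_scaled_apply_two_eq_zero, add_zero]

/-- If the rod is isotropic (`B₁ = B₂` and `H = J`), then along any
solution `(m, n, e)` of the magnetic rod equations the twist `I₁ = m₃` is constant in `t`. -/
theorem twist_conserved_of_isotropic
    (B₁ B₂ C H J K lam : ℝ)
    (hB₁ : 0 < B₁) (hB₂ : 0 < B₂) (hC : 0 < C) (hH : 0 < H) (hJ : 0 < J) (hK : 0 < K)
    (m n e : ℝ → Fin 3 → ℝ)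
    (hm : Differentiable ℝ m) (hn : Differentiable ℝ n) (he : Differentiable ℝ e)
    (u : ℝ → Fin 3 → ℝ) (hu : ∀ t, u t = ![m t 0 / B₁, m t 1 / B₂, m t 2 / C])
    (w : ℝ → Fin 3 → ℝ) (hw : ∀ t, w t = ![n t 0 / H, n t 1 / J, 1 + n t 2 / K])
    (heqm : ∀ t, deriv m t = m t ⨯₃ u t + n t ⨯₃ w t)
    (heqn : ∀ t, deriv n t = n t ⨯₃ u t + lam • (e t ⨯₃ w t))
    (heqe : ∀ t, deriv e t = e t ⨯₃ u t)
    (hiso₁ : B₁ = B₂) (hiso₂ : H = J) :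
    ∀ t, deriv (fun t => m t 2) t = 0 :=
  twist_conserved_of_isotropic_general B₁ B₂ C H J K m n hm u hu w hw heqm hiso₁ hiso₂
end

section
/- Each of the functions C₁(m,n,e) = ½ n·n + λ m·e, C₂(m,n,e) = e·n and C₃(m,n,e) = e·e is a Casimir of the magnetic rod Poisson bracket: for every differentiable function g : ℝ³×ℝ³×ℝ³ → ℝ and every point (m,n,e), one has {Cᵢ, g}(m,n,e) = 0 for i = 1, 2, 3. -/
/-! By the cyclic symmetry of the triple product, the rod bracket can be regrouped as
`{f,g} = −∇ₘg·(m×∇ₘf + n×∇ₙf + e×∇ₑf) − ∇ₙg·(n×∇ₘf + λ e×∇ₙf) − ∇ₑg·(e×∇ₘf)`,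
so `f` is a Casimir wherever these three cross products vanish. The gradients
`(λe, n, λm)`, `(0, e, n)` and `(0, 0, 2e)` of `C₁`, `C₂`, `C₃` make all of them vanish by
antisymmetry of the cross product. -/

open Matrix Real

/-- The phase space of the magnetic rod: triples `(m, n, e)` of vectors in `ℝ³`. -/
abbrev RodPhase : Type := (Fin 3 → ℝ) × (Fin 3 → ℝ) × (Fin 3 → ℝ)

/-- Gradient of `f : RodPhase → ℝ` with respect to the first (`m`) argument. -/
noncomputable def gradM (f : RodPhase → ℝ) (p : RodPhase) : Fin 3 → ℝ :=
  fun i => fderiv ℝ f p (Pi.single i 1, 0, 0)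

/-- Gradient of `f : RodPhase → ℝ` with respect to the second (`n`) argument. -/
noncomputable def gradN (f : RodPhase → ℝ) (p : RodPhase) : Fin 3 → ℝ :=
  fun i => fderiv ℝ f p (0, Pi.single i 1, 0)

/-- Gradient of `f : RodPhase → ℝ` with respect to the third (`e`) argument. -/
noncomputable def gradE (f : RodPhase → ℝ) (p : RodPhase) : Fin 3 → ℝ :=
  fun i => fderiv ℝ f p (0, 0, Pi.single i 1)

/-- The magnetic rod Poisson bracket
`{f,g}(m,n,e) = −m·(∇ₘf × ∇ₘg) − n·(∇ₘf × ∇ₙg + ∇ₙf × ∇ₘg)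
  − e·(∇ₘf × ∇ₑg + ∇ₑf × ∇ₘg) − λ e·(∇ₙf × ∇ₙg)`. -/
noncomputable def rodBracket (lam : ℝ) (f g : RodPhase → ℝ) (p : RodPhase) : ℝ :=
  - (p.1 ⬝ᵥ (gradM f p ⨯₃ gradM g p))
  - (p.2.1 ⬝ᵥ (gradM f p ⨯₃ gradN g p + gradN f p ⨯₃ gradM g p))
  - (p.2.2 ⬝ᵥ (gradM f p ⨯₃ gradE g p + gradE f p ⨯₃ gradM g p))
  - lam * (p.2.2 ⬝ᵥ (gradN f p ⨯₃ gradN g p))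

section
variable {E ι : Type*} [NormedAddCommGroup E] [NormedSpace ℝ E] [Fintype ι]
  {u v : E → ι → ℝ} {x : E}

@[fun_prop]
theorem DifferentiableAt.dotProduct (hu : DifferentiableAt ℝ u x) (hv : DifferentiableAt ℝ v x) :
    DifferentiableAt ℝ (fun y => u y ⬝ᵥ v y) x := by
  have := differentiableAt_pi.1 hu
  have := differentiableAt_pi.1 hv
  simp only [_root_.dotProduct]
  fun_prop

theorem fderiv_dotProduct (hu : DifferentiableAt ℝ u x) (hv : DifferentiableAt ℝ v x) (h : E) :
    fderiv ℝ (fun y => u y ⬝ᵥ v y) x h = fderiv ℝ u x h ⬝ᵥ v x + u x ⬝ᵥ fderiv ℝ v x h := by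
  have hu' := differentiableAt_pi.1 hu
  have hv' := differentiableAt_pi.1 hv
  simp only [dotProduct]
  rw [fderiv_fun_sum (A := fun i y => u y i * v y i) fun i _ => (hu' i).fun_mul (hv' i)]
  simp only [FunLike.coe_sum, Finset.sum_apply, ← Finset.sum_add_distrib]
  refine Finset.sum_congr rfl fun i _ => ?_
  rw [fderiv_fun_mul (hu' i) (hv' i), fderiv_apply hu, fderiv_apply hv]
  simp only [_root_.add_apply, _root_.smul_apply, smul_eq_mul, ContinuousLinearMap.coe_comp,
    Function.comp_apply, ContinuousLinearMap.proj_apply]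
  ring
end

theorem fderiv_rodPhase_m (p h : RodPhase) : fderiv ℝ (fun q : RodPhase => q.1) p h = h.1 := by
  rw [hasFDerivAt_fst.fderiv]; rfl

theorem fderiv_rodPhase_n (p h : RodPhase) : fderiv ℝ (fun q : RodPhase => q.2.1) p h = h.2.1 := by
  rw [hasFDerivAt_snd.fst.fderiv]; rfl

theorem fderiv_rodPhase_e (p h : RodPhase) : fderiv ℝ (fun q : RodPhase => q.2.2) p h = h.2.2 := by
  rw [hasFDerivAt_snd.snd.fderiv]; rfl

theorem grad_eq_of_fderiv_eq {f : RodPhase → ℝ} {p : RodPhase} {a b c : Fin 3 → ℝ}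
    (hf : ∀ h : RodPhase, fderiv ℝ f p h = a ⬝ᵥ h.1 + b ⬝ᵥ h.2.1 + c ⬝ᵥ h.2.2) :
    gradM f p = a ∧ gradN f p = b ∧ gradE f p = c := by
  refine ⟨funext fun i => ?_, funext fun i => ?_, funext fun i => ?_⟩ <;>
    simp [gradM, gradN, gradE, hf]

theorem rodBracket_eq_grad_dotProduct (lam : ℝ) (f g : RodPhase → ℝ) (p : RodPhase) :
    rodBracket lam f g p =
      -(gradM g p ⬝ᵥ (p.1 ⨯₃ gradM f p + p.2.1 ⨯₃ gradN f p + p.2.2 ⨯₃ gradE f p))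
      - gradN g p ⬝ᵥ (p.2.1 ⨯₃ gradM f p + lam • (p.2.2 ⨯₃ gradN f p))
      - gradE g p ⬝ᵥ (p.2.2 ⨯₃ gradM f p) := by
  simp only [rodBracket, dotProduct_add, dotProduct_smul, smul_eq_mul,
    triple_product_permutation (gradM g p), triple_product_permutation (gradN g p),
    triple_product_permutation (gradE g p)]
  ring

theorem rodBracket_eq_zero_of_cross_eq_zero {lam : ℝ} {f : RodPhase → ℝ} {p : RodPhase}
    (hm : p.1 ⨯₃ gradM f p + p.2.1 ⨯₃ gradN f p + p.2.2 ⨯₃ gradE f p = 0)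
    (hn : p.2.1 ⨯₃ gradM f p + lam • (p.2.2 ⨯₃ gradN f p) = 0)
    (he : p.2.2 ⨯₃ gradM f p = 0) (g : RodPhase → ℝ) :
    rodBracket lam f g p = 0 := by
  simp [rodBracket_eq_grad_dotProduct, hm, hn, he]

noncomputable def rodCasimir₁ (lam : ℝ) (p : RodPhase) : ℝ :=
  1 / 2 * (p.2.1 ⬝ᵥ p.2.1) + lam * (p.1 ⬝ᵥ p.2.2)

def rodCasimir₂ (p : RodPhase) : ℝ := p.2.2 ⬝ᵥ p.2.1

def rodCasimir₃ (p : RodPhase) : ℝ := p.2.2 ⬝ᵥ p.2.2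

theorem fderiv_rodCasimir₁ (lam : ℝ) (p h : RodPhase) :
    fderiv ℝ (rodCasimir₁ lam) p h =
      (lam • p.2.2) ⬝ᵥ h.1 + p.2.1 ⬝ᵥ h.2.1 + (lam • p.1) ⬝ᵥ h.2.2 := by
  unfold rodCasimir₁
  rw [fderiv_fun_add (by fun_prop) (by fun_prop), fderiv_const_mul (by fun_prop),
    fderiv_const_mul (by fun_prop)]
  simp only [_root_.add_apply, _root_.smul_apply, smul_eq_mul]
  rw [fderiv_dotProduct (by fun_prop) (by fun_prop), fderiv_dotProduct (by fun_prop) (by fun_prop)]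
  simp only [fderiv_rodPhase_m, fderiv_rodPhase_n, fderiv_rodPhase_e, dotProduct_comm h.2.1,
    smul_dotProduct, dotProduct_comm h.1, smul_eq_mul]
  ring

theorem fderiv_rodCasimir₂ (p h : RodPhase) :
    fderiv ℝ rodCasimir₂ p h = 0 ⬝ᵥ h.1 + p.2.2 ⬝ᵥ h.2.1 + p.2.1 ⬝ᵥ h.2.2 := by
  unfold rodCasimir₂
  rw [fderiv_dotProduct (by fun_prop) (by fun_prop)]
  simp only [fderiv_rodPhase_n, fderiv_rodPhase_e, dotProduct_comm h.2.2, zero_dotProduct,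
    zero_add]
  ring

theorem fderiv_rodCasimir₃ (p h : RodPhase) :
    fderiv ℝ rodCasimir₃ p h = 0 ⬝ᵥ h.1 + 0 ⬝ᵥ h.2.1 + ((2 : ℝ) • p.2.2) ⬝ᵥ h.2.2 := by
  unfold rodCasimir₃
  rw [fderiv_dotProduct (by fun_prop) (by fun_prop)]
  simp only [fderiv_rodPhase_e, dotProduct_comm h.2.2, zero_dotProduct, zero_add, two_smul,
    add_dotProduct]

theorem rodBracket_rodCasimir₁ (lam : ℝ) (g : RodPhase → ℝ) (p : RodPhase) :
    rodBracket lam (rodCasimir₁ lam) g p = 0 := by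
  obtain ⟨hm, hn, he⟩ := grad_eq_of_fderiv_eq (fderiv_rodCasimir₁ lam p)
  apply rodBracket_eq_zero_of_cross_eq_zero <;> simp [hm, hn, he, ← smul_add]

theorem rodBracket_rodCasimir₂ (lam : ℝ) (g : RodPhase → ℝ) (p : RodPhase) :
    rodBracket lam rodCasimir₂ g p = 0 := by
  obtain ⟨hm, hn, he⟩ := grad_eq_of_fderiv_eq (fderiv_rodCasimir₂ p)
  apply rodBracket_eq_zero_of_cross_eq_zero <;> simp [hm, hn, he]

theorem rodBracket_rodCasimir₃ (lam : ℝ) (g : RodPhase → ℝ) (p : RodPhase) :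
    rodBracket lam rodCasimir₃ g p = 0 := by
  obtain ⟨hm, hn, he⟩ := grad_eq_of_fderiv_eq (fderiv_rodCasimir₃ p)
  apply rodBracket_eq_zero_of_cross_eq_zero <;> simp [hm, hn, he]

/-- Each of `C₁ = ½ n·n + λ m·e`, `C₂ = e·n` and `C₃ = e·e` is a Casimir
of the magnetic rod Poisson bracket: it brackets to zero with every differentiable
function `g` at every point. -/
theorem casimirs_of_rodBracket (lam : ℝ)
    (C₁ C₂ C₃ : RodPhase → ℝ)
    (hC₁ : ∀ p : RodPhase, C₁ p = (1 / 2) * (p.2.1 ⬝ᵥ p.2.1) + lam * (p.1 ⬝ᵥ p.2.2))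
    (hC₂ : ∀ p : RodPhase, C₂ p = p.2.2 ⬝ᵥ p.2.1)
    (hC₃ : ∀ p : RodPhase, C₃ p = p.2.2 ⬝ᵥ p.2.2) :
    ∀ g : RodPhase → ℝ, Differentiable ℝ g →
      ∀ p : RodPhase,
        rodBracket lam C₁ g p = 0 ∧ rodBracket lam C₂ g p = 0 ∧ rodBracket lam C₃ g p = 0 := by
  intro g _ p
  obtain rfl : C₁ = rodCasimir₁ lam := funext hC₁
  obtain rfl : C₂ = rodCasimir₂ := funext hC₂
  obtain rfl : C₃ = rodCasimir₃ := funext hC₃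
  exact ⟨rodBracket_rodCasimir₁ lam g p, rodBracket_rodCasimir₂ lam g p,
    rodBracket_rodCasimir₃ lam g p⟩
end

section
/- Fix B, C > 0 and λ ∈ ℝ, and define on ℝ³×ℝ³×ℝ³ the functions ℋ(m,n,e) = (m₁² + m₂²)/(2B) + m₃²/(2C) + n₃, I₁(m,n,e) = B m₃, and I₂(m,n,e) = m·n + B λ e₃. Then ℋ, I₁ and I₂ are pairwise in involution with respect to the magnetic rod Poisson bracket: {ℋ, I₁} = {ℋ, I₂} = {I₁, I₂} = 0 identically. -/
open Matrix Real

/-!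
All three functions are polynomials, so their partial gradients are read off from their Fréchet
derivatives: with `ẑ = (0, 0, 1)`, `∇ℋ = ((m₁/B, m₂/B, m₃/C), ẑ, 0)`, `∇I₁ = (B ẑ, 0, 0)` and
`∇I₂ = (n, m, Bλ ẑ)`. Substituted into the bracket, everything cancels by antisymmetry of the
triple product, except in `{ℋ, I₂}`, where `−e·(∇ₘℋ × Bλ ẑ)` cancels `−λ e·(ẑ × m)` only
because `B ≠ 0`.
-/

section Coordinates

variable (i : Fin 3) (p : RodPhase)

theorem hasFDerivAt_m_apply :
    HasFDerivAt (fun q : RodPhase => q.1 i)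
      ((ContinuousLinearMap.proj i).comp (ContinuousLinearMap.fst ℝ _ _)) p :=
  (hasFDerivAt_apply i p.1).comp (g := fun v : Fin 3 → ℝ => v i) p hasFDerivAt_fst

theorem hasFDerivAt_n_apply :
    HasFDerivAt (fun q : RodPhase => q.2.1 i)
      ((ContinuousLinearMap.proj i).comp
        ((ContinuousLinearMap.fst ℝ _ _).comp (ContinuousLinearMap.snd ℝ _ _))) p :=
  (hasFDerivAt_apply i p.2.1).comp (g := fun v : Fin 3 → ℝ => v i) p hasFDerivAt_snd.fst

theorem hasFDerivAt_e_apply :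
    HasFDerivAt (fun q : RodPhase => q.2.2 i)
      ((ContinuousLinearMap.proj i).comp
        ((ContinuousLinearMap.snd ℝ _ _).comp (ContinuousLinearMap.snd ℝ _ _))) p :=
  (hasFDerivAt_apply i p.2.2).comp (g := fun v : Fin 3 → ℝ => v i) p hasFDerivAt_snd.snd

end Coordinates

theorem gradients_of_hasFDerivAt {f : RodPhase → ℝ} {f' : RodPhase →L[ℝ] ℝ} {p : RodPhase}
    {a b c : Fin 3 → ℝ} (hf : HasFDerivAt f f' p)
    (hf' : ∀ v : RodPhase, f' v = a ⬝ᵥ v.1 + b ⬝ᵥ v.2.1 + c ⬝ᵥ v.2.2) :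
    gradM f p = a ∧ gradN f p = b ∧ gradE f p = c := by
  refine ⟨funext fun i => ?_, funext fun i => ?_, funext fun i => ?_⟩ <;>
    simp [gradM, gradN, gradE, hf.fderiv, hf']

theorem gradients_of_hamiltonian {B C : ℝ} {ℋ : RodPhase → ℝ} (hℋ : ∀ p : RodPhase,
      ℋ p = ((p.1 0) ^ 2 + (p.1 1) ^ 2) / (2 * B) + (p.1 2) ^ 2 / (2 * C) + p.2.1 2)
    (p : RodPhase) :
    gradM ℋ p = ![p.1 0 / B, p.1 1 / B, p.1 2 / C] ∧ gradN ℋ p = ![0, 0, 1] ∧ gradE ℋ p = 0 := by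
  obtain rfl : ℋ = fun q : RodPhase =>
      ((q.1 0) ^ 2 + (q.1 1) ^ 2) * (2 * B)⁻¹ + (q.1 2) ^ 2 * (2 * C)⁻¹ + q.2.1 2 :=
    funext fun q => by simp only [hℋ, div_eq_mul_inv]
  have hm := hasFDerivAt_m_apply (p := p)
  refine gradients_of_hasFDerivAt ((((((hm 0).pow 2).add ((hm 1).pow 2)).mul_const _).add
    (((hm 2).pow 2).mul_const _)).add (hasFDerivAt_n_apply 2 p)) fun v => ?_
  simp only [_root_.add_apply, _root_.smul_apply, ContinuousLinearMap.comp_apply,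
    ContinuousLinearMap.coe_fst', ContinuousLinearMap.coe_snd',
    ContinuousLinearMap.proj_apply, smul_eq_mul, dotProduct, Fin.sum_univ_three, cons_val_zero,
    cons_val_one, cons_val_two, head_cons, tail_cons, Pi.zero_apply]
  ring

theorem gradients_of_twistIntegral {B : ℝ} {I₁ : RodPhase → ℝ}
    (hI₁ : ∀ p : RodPhase, I₁ p = B * p.1 2) (p : RodPhase) :
    gradM I₁ p = ![0, 0, B] ∧ gradN I₁ p = 0 ∧ gradE I₁ p = 0 := by
  obtain rfl : I₁ = fun q : RodPhase => B * q.1 2 := funext hI₁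
  refine gradients_of_hasFDerivAt ((hasFDerivAt_m_apply 2 p).const_mul B) fun v => ?_
  simp [dotProduct, Fin.sum_univ_three]

theorem gradients_of_secondIntegral {B lam : ℝ} {I₂ : RodPhase → ℝ}
    (hI₂ : ∀ p : RodPhase, I₂ p = p.1 ⬝ᵥ p.2.1 + B * lam * p.2.2 2) (p : RodPhase) :
    gradM I₂ p = p.2.1 ∧ gradN I₂ p = p.1 ∧ gradE I₂ p = ![0, 0, B * lam] := by
  obtain rfl : I₂ = fun q : RodPhase =>
      q.1 0 * q.2.1 0 + q.1 1 * q.2.1 1 + q.1 2 * q.2.1 2 + B * lam * q.2.2 2 :=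
    funext fun q => by simp [hI₂, dotProduct, Fin.sum_univ_three]
  have hm := hasFDerivAt_m_apply (p := p)
  have hn := hasFDerivAt_n_apply (p := p)
  refine gradients_of_hasFDerivAt (((((hm 0).mul (hn 0)).add ((hm 1).mul (hn 1))).add
    ((hm 2).mul (hn 2))).add ((hasFDerivAt_e_apply 2 p).const_mul _)) fun v => ?_
  simp only [_root_.add_apply, _root_.smul_apply, ContinuousLinearMap.comp_apply,
    ContinuousLinearMap.coe_fst', ContinuousLinearMap.coe_snd',
    ContinuousLinearMap.proj_apply, smul_eq_mul, dotProduct, Fin.sum_univ_three, cons_val_zero,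
    cons_val_one, cons_val_two, head_cons, tail_cons]
  ring

theorem integrals_in_involution_general (B C lam : ℝ) (hB : 0 < B)
    (ℋ I₁ I₂ : RodPhase → ℝ)
    (hℋ : ∀ p : RodPhase,
      ℋ p = ((p.1 0) ^ 2 + (p.1 1) ^ 2) / (2 * B) + (p.1 2) ^ 2 / (2 * C) + p.2.1 2)
    (hI₁ : ∀ p : RodPhase, I₁ p = B * p.1 2)
    (hI₂ : ∀ p : RodPhase, I₂ p = p.1 ⬝ᵥ p.2.1 + B * lam * p.2.2 2) :
    ∀ p : RodPhase,
      rodBracket lam ℋ I₁ p = 0 ∧ rodBracket lam ℋ I₂ p = 0 ∧ rodBracket lam I₁ I₂ p = 0 := by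
  intro p
  obtain ⟨hℋm, hℋn, hℋe⟩ := gradients_of_hamiltonian hℋ p
  obtain ⟨h₁m, h₁n, h₁e⟩ := gradients_of_twistIntegral hI₁ p
  obtain ⟨h₂m, h₂n, h₂e⟩ := gradients_of_secondIntegral hI₂ p
  refine ⟨?_, ?_, ?_⟩ <;>
  · simp only [rodBracket, hℋm, hℋn, hℋe, h₁m, h₁n, h₁e, h₂m, h₂n, h₂e, cross_apply,
      dotProduct, Fin.sum_univ_three, Pi.add_apply, Pi.zero_apply, Matrix.cons_val_zero,
      Matrix.cons_val_one, Matrix.cons_val_two, Matrix.head_cons, Matrix.tail_cons]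
    field_simp
    ring

/-- For the inextensible, unshearable, isotropic magnetic rod, the
Hamiltonian `ℋ = (m₁² + m₂²)/(2B) + m₃²/(2C) + n₃`, the twist integral `I₁ = B m₃` and the
second integral `I₂ = m·n + B λ e₃` are pairwise in involution with respect to the magnetic
rod Poisson bracket. -/
theorem integrals_in_involution (B C lam : ℝ) (hB : 0 < B) (hC : 0 < C)
    (ℋ I₁ I₂ : RodPhase → ℝ)
    (hℋ : ∀ p : RodPhase,
      ℋ p = ((p.1 0) ^ 2 + (p.1 1) ^ 2) / (2 * B) + (p.1 2) ^ 2 / (2 * C) + p.2.1 2)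
    (hI₁ : ∀ p : RodPhase, I₁ p = B * p.1 2)
    (hI₂ : ∀ p : RodPhase, I₂ p = p.1 ⬝ᵥ p.2.1 + B * lam * p.2.2 2) :
    ∀ p : RodPhase,
      rodBracket lam ℋ I₁ p = 0 ∧ rodBracket lam ℋ I₂ p = 0 ∧ rodBracket lam I₁ I₂ p = 0 :=
  integrals_in_involution_general B C lam hB ℋ I₁ I₂ hℋ hI₁ hI₂
end

section
/- Let γ ≥ 0 and m > 0, and define f(θ) = −(1−cos θ)²/sin³θ + (1 + γ cos θ) sin θ/m² for θ ∈ (0, π). Then lim_{θ→0⁺} f(θ)/θ = (1+γ)/m² − 1/4; in particular this limit is positive if and only if m² < 4(1+γ), so that the trivial equilibrium θ = 0 of the system θ' = p_θ, p_θ' = f(θ) is a hyperbolic saddle precisely when 0 < m² < 4(1+γ). -/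
/-!
Near `θ = 0` both `sin θ / θ` and `(1 - cos θ) / θ²` are values of the continuous function
`sinc` (the latter via `1 - cos θ = 2 sin² (θ/2)`), so `f θ / θ` agrees off `0` with a function
that is continuous at `0`; its value there, `-(1/2)² + (1 + γ)/m²`, is the limit.
-/

open Real Filter Topology Set

lemma one_sub_cos_div_sq_eq_sinc_half {θ : ℝ} (hθ : θ ≠ 0) :
    (1 - cos θ) / θ ^ 2 = sinc (θ / 2) ^ 2 / 2 := by
  have hcos : cos θ = 1 - 2 * sin (θ / 2) ^ 2 := by
    rw [← cos_two_mul_eq_one_sub, mul_div_cancel₀ θ two_ne_zero]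
  rw [sinc_of_ne_zero (div_ne_zero hθ two_ne_zero), hcos]
  field_simp
  ring

lemma rod_force_div_self_eq (γ m : ℝ) {θ : ℝ} (hθ : θ ≠ 0) :
    (-(1 - cos θ) ^ 2 / sin θ ^ 3 + (1 + γ * cos θ) * sin θ / m ^ 2) / θ =
      -(sinc (θ / 2) ^ 2 / 2) ^ 2 / sinc θ ^ 3 + (1 + γ * cos θ) * sinc θ / m ^ 2 := by
  rw [← one_sub_cos_div_sq_eq_sinc_half hθ, sinc_of_ne_zero hθ]
  -- at a zero of `sin` both sides are `0`, by the convention `x / 0 = 0`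
  by_cases hsin : sin θ = 0
  · simp [hsin]
  · field_simp

lemma tendsto_rod_force_div_self (γ m : ℝ) :
    Tendsto (fun θ => (-(1 - cos θ) ^ 2 / sin θ ^ 3 + (1 + γ * cos θ) * sin θ / m ^ 2) / θ)
      (𝓝[≠] 0) (𝓝 ((1 + γ) / m ^ 2 - 1 / 4)) := by
  have hcont : ContinuousAt (fun θ => -(sinc (θ / 2) ^ 2 / 2) ^ 2 / sinc θ ^ 3
      + (1 + γ * cos θ) * sinc θ / m ^ 2) 0 := by
    have hsinc := continuous_sinc
    fun_prop (disch := simp [sinc_zero])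
  refine ((hcont.tendsto.mono_left nhdsWithin_le_nhds).congr' ?_).trans_eq ?_
  · filter_upwards [self_mem_nhdsWithin] with θ hθ
    exact (rod_force_div_self_eq γ m hθ).symm
  · norm_num [sinc_zero]
    ring

theorem linearisation_at_trivial_equilibrium_general (γ m : ℝ) (hm : 0 < m)
    (f : ℝ → ℝ)
    (hf : ∀ θ, f θ = -(1 - cos θ) ^ 2 / (sin θ) ^ 3 + (1 + γ * cos θ) * sin θ / m ^ 2) :
    Tendsto (fun θ => f θ / θ) (nhdsWithin 0 (Set.Ioi 0))
        (nhds ((1 + γ) / m ^ 2 - 1 / 4)) ∧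
      (0 < (1 + γ) / m ^ 2 - 1 / 4 ↔ m ^ 2 < 4 * (1 + γ)) := by
  have hIoi : Ioi (0 : ℝ) ⊆ {0}ᶜ := fun _ hx => ne_of_gt hx
  refine ⟨((tendsto_rod_force_div_self γ m).mono_left (nhdsWithin_mono 0 hIoi)).congr
    fun θ => by rw [hf], ?_⟩
  rw [sub_pos, div_lt_div_iff₀ four_pos (by positivity), one_mul, mul_comm]

/-- For `γ ≥ 0`, `m > 0` and
`f(θ) = −(1−cos θ)²/sin³θ + (1 + γ cos θ) sin θ/m²` on `(0, π)`, one has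
`lim_{θ→0⁺} f(θ)/θ = (1+γ)/m² − 1/4`; in particular this limit is positive if and only if
`m² < 4(1+γ)`, so the trivial equilibrium `θ = 0` of `θ' = p_θ, p_θ' = f(θ)` is a
hyperbolic saddle precisely when `0 < m² < 4(1+γ)`. -/
theorem linearisation_at_trivial_equilibrium (γ m : ℝ) (hγ : 0 ≤ γ) (hm : 0 < m)
    (f : ℝ → ℝ)
    (hf : ∀ θ, f θ = -(1 - cos θ) ^ 2 / (sin θ) ^ 3 + (1 + γ * cos θ) * sin θ / m ^ 2) :
    Tendsto (fun θ => f θ / θ) (nhdsWithin 0 (Set.Ioi 0))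
        (nhds ((1 + γ) / m ^ 2 - 1 / 4)) ∧
      (0 < (1 + γ) / m ^ 2 - 1 / 4 ↔ m ^ 2 < 4 * (1 + γ)) :=
  linearisation_at_trivial_equilibrium_general γ m hm f hf
end

section
/- Let γ > 0 and 0 < m² < 4(1+γ), set u_± = −(1 + 1/γ) ± √(1 + γm²)/γ, A = 1 − u_−, B = 1 − u_+, and define u(t) = 1 − 2AB/((A + B) + (A − B) cosh(√(γAB) t/m)) for t ∈ ℝ. Then u is smooth and even, u(0) = u_+, u_+ ≤ u(t) < 1 for all t, u(t) → 1 as t → ±∞, and u satisfies the first-order equation (u'(t))² = (γ/m²)(1 − u(t))²(u(t) − u_−)(u(t) − u_+) for all t. Consequently θ(t) = arccos u(t) is a smooth homoclinic solution: ½(θ'(t))² + V(θ(t)) = (2+γ)/(2m²) for all t and θ(t) → 0 as t → ±∞. -/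
open Real Filter

lemma my_tendsto_cosh_atTop : Tendsto Real.cosh atTop atTop := by
  apply tendsto_atTop_mono (fun x => ?_) (Real.tendsto_exp_atTop.atTop_div_const two_pos)
  rw [Real.cosh_eq]
  have := Real.exp_pos (-x)
  linarith

lemma my_tendsto_cosh_mul (k : ℝ) (hk : k ≠ 0) :
    Tendsto (fun t : ℝ => Real.cosh (k * t)) atTop atTop := by
  have h1 : Tendsto (fun t : ℝ => |k| * t) atTop atTop :=
    tendsto_id.const_mul_atTop (abs_pos.2 hk)
  have h2 : Tendsto (fun t : ℝ => Real.cosh (|k| * t)) atTop atTop :=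
    my_tendsto_cosh_atTop.comp h1
  apply h2.congr'
  filter_upwards [eventually_ge_atTop (0:ℝ)] with t ht
  rw [show |k| * t = |k * t| by rw [abs_mul, abs_of_nonneg ht], Real.cosh_abs]

lemma key_alg (γ m A B X S cc : ℝ) (hm : m ≠ 0) (hE : (A+B)+(A-B)*X ≠ 0)
    (hS : S^2 = X^2 - 1) (hc : cc^2 = γ*A*B) :
    (2*A*B*((A-B)*(S*(cc/m)))/(((A+B)+(A-B)*X)^2))^2
      = (γ/m^2)*(1 - (1 - 2*A*B/((A+B)+(A-B)*X)))^2
        * ((1 - 2*A*B/((A+B)+(A-B)*X)) - (1-A))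
        * ((1 - 2*A*B/((A+B)+(A-B)*X)) - (1-B)) := by
  have h1 : (2*A*B*((A-B)*(S*(cc/m)))/(((A+B)+(A-B)*X)^2))^2
      = 4*(A*B)^2*(A-B)^2*(S^2)*(cc^2)/(m^2*(((A+B)+(A-B)*X)^2)^2) := by
    field_simp; ring
  rw [h1, hS, hc]
  field_simp
  ring

lemma energy_alg (γ m s v : ℝ) (hγ : γ ≠ 0) (hm : m ≠ 0) (hs : s^2 = 1 + γ*m^2)
    (h1 : 1 + v ≠ 0) (h2 : 1 - v ≠ 0) :
    (1/2) * ((γ/m^2) * (1-v)^2 * (v - (-(1+1/γ) - s/γ)) * (v - (-(1+1/γ) + s/γ)) / (1 - v^2))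
      + ((1-v)/(2*(1+v)) + v/m^2 + γ*v^2/(2*m^2)) = (2+γ)/(2*m^2) := by
  have hv2 : 1 - v^2 ≠ 0 := by
    have h : 1 - v^2 = (1-v)*(1+v) := by ring
    rw [h]; exact mul_ne_zero h2 h1
  field_simp
  ring_nf
  linear_combination (norm := ring_nf) (v+v^2-v^3-1) * hs

/-- For `γ > 0` and `0 < m² < 4(1+γ)`, with
`u_± = −(1 + 1/γ) ± √(1 + γm²)/γ`, `A = 1 − u_−`, `B = 1 − u_+`, the function
`u(t) = 1 − 2AB/((A + B) + (A − B) cosh(√(γAB) t/m))` is smooth and even, satisfies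
`u(0) = u_+`, `u_+ ≤ u(t) < 1`, `u(t) → 1` as `t → ±∞`, and the first-order equation
`(u')² = (γ/m²)(1 − u)²(u − u_−)(u − u_+)`; consequently `θ = arccos ∘ u` is a smooth
homoclinic solution: `½(θ')² + V(θ) = (2+γ)/(2m²)` and `θ(t) → 0` as `t → ±∞`. -/
theorem homoclinic_solution_extensible_rod (γ m : ℝ) (hγ : 0 < γ)
    (hm₁ : 0 < m ^ 2) (hm₂ : m ^ 2 < 4 * (1 + γ))
    (uplus uminus A B : ℝ)
    (hup : uplus = -(1 + 1 / γ) + Real.sqrt (1 + γ * m ^ 2) / γ)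
    (hum : uminus = -(1 + 1 / γ) - Real.sqrt (1 + γ * m ^ 2) / γ)
    (hA : A = 1 - uminus) (hB : B = 1 - uplus)
    (u : ℝ → ℝ)
    (hu : ∀ t, u t = 1 - 2 * A * B / ((A + B) + (A - B) * Real.cosh (Real.sqrt (γ * A * B) * t / m)))
    (V : ℝ → ℝ)
    (hV : ∀ θ, V θ = (1 - cos θ) / (2 * (1 + cos θ)) + cos θ / m ^ 2
      + γ * (cos θ) ^ 2 / (2 * m ^ 2))
    (θ : ℝ → ℝ) (hθ : ∀ t, θ t = Real.arccos (u t)) :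
    ContDiff ℝ (⊤ : ℕ∞) u ∧
    (∀ t, u (-t) = u t) ∧
    u 0 = uplus ∧
    (∀ t, uplus ≤ u t ∧ u t < 1) ∧
    Tendsto u atTop (nhds 1) ∧ Tendsto u atBot (nhds 1) ∧
    (∀ t, (deriv u t) ^ 2 =
      (γ / m ^ 2) * (1 - u t) ^ 2 * (u t - uminus) * (u t - uplus)) ∧
    ContDiff ℝ (⊤ : ℕ∞) θ ∧
    (∀ t, (1 / 2) * (deriv θ t) ^ 2 + V (θ t) = (2 + γ) / (2 * m ^ 2)) ∧
    Tendsto θ atTop (nhds 0) ∧ Tendsto θ atBot (nhds 0) := by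
  have hm0 : m ≠ 0 := fun h => by simp [h] at hm₁
  have hγ0 : γ ≠ 0 := hγ.ne'
  set s : ℝ := Real.sqrt (1 + γ * m ^ 2) with hsdef
  have hs2 : s ^ 2 = 1 + γ * m ^ 2 := Real.sq_sqrt (by positivity)
  have hs0 : 0 ≤ s := Real.sqrt_nonneg _
  have hs1 : 1 < s := by nlinarith [mul_pos hγ hm₁]
  have hslt : s < 2 * γ + 1 := by nlinarith [mul_lt_mul_of_pos_left hm₂ hγ]
  have hBval : B = (2 * γ + 1 - s) / γ := by rw [hB, hup]; field_simp; ring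
  have hAval : A = (2 * γ + 1 + s) / γ := by rw [hA, hum]; field_simp; ring
  have hBpos : 0 < B := by rw [hBval]; exact div_pos (by linarith) hγ
  have hApos : 0 < A := by rw [hAval]; exact div_pos (by linarith) hγ
  have hABsub : 0 < A - B := by
    rw [hAval, hBval, div_sub_div_same]
    exact div_pos (by linarith) hγ
  have hgAB : γ * A * B = 4 * (1 + γ) - m ^ 2 := by
    rw [hAval, hBval]
    field_simp
    linear_combination (-1 : ℝ) * hs2
  have hgABpos : 0 < γ * A * B := by rw [hgAB]; linarith
  set c : ℝ := Real.sqrt (γ * A * B) with hcdef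
  have hc2 : c ^ 2 = γ * A * B := Real.sq_sqrt hgABpos.le
  have hcpos : 0 < c := Real.sqrt_pos.2 hgABpos
  have hEpos : ∀ t : ℝ, 0 < (A + B) + (A - B) * Real.cosh (c * t / m) := by
    intro t
    have h := mul_le_mul_of_nonneg_left (Real.one_le_cosh (c * t / m)) hABsub.le
    nlinarith
  have hE2A : ∀ t : ℝ, 2 * A ≤ (A + B) + (A - B) * Real.cosh (c * t / m) := by
    intro t
    have h := mul_le_mul_of_nonneg_left (Real.one_le_cosh (c * t / m)) hABsub.le
    nlinarith
  have heq : u = fun t => 1 - 2 * A * B / ((A + B) + (A - B) * Real.cosh (c * t / m)) :=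
    funext hu
  -- smoothness of u
  have hEcd : ContDiff ℝ (⊤ : ℕ∞) (fun t : ℝ => (A + B) + (A - B) * Real.cosh (c * t / m)) :=
    contDiff_const.add (contDiff_const.mul
      (Real.contDiff_cosh.comp ((contDiff_const.mul contDiff_id).div_const m)))
  have hucd : ContDiff ℝ (⊤ : ℕ∞) u := by
    rw [heq]
    exact contDiff_const.sub (contDiff_const.div hEcd fun t => (hEpos t).ne')
  -- derivative of u
  have hudv : ∀ t : ℝ, HasDerivAt u
      (2*A*B*((A-B)*(Real.sinh (c*t/m)*(c/m)))/(((A+B)+(A-B)*Real.cosh (c*t/m))^2)) t := by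
    intro t
    have hinner : HasDerivAt (fun t : ℝ => c * t / m) (c / m) t := by
      simpa using ((hasDerivAt_id t).const_mul c).div_const m
    have hcosh : HasDerivAt (fun t : ℝ => Real.cosh (c * t / m))
        (Real.sinh (c * t / m) * (c / m)) t := hinner.cosh
    have hE' : HasDerivAt (fun t : ℝ => (A + B) + (A - B) * Real.cosh (c * t / m))
        ((A - B) * (Real.sinh (c * t / m) * (c / m))) t :=
      (hcosh.const_mul (A - B)).const_add (A + B)
    have hfr := ((hasDerivAt_const t (2 * A * B)).div hE' (hEpos t).ne').const_sub 1
    rw [heq]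
    exact hfr.congr_deriv (by ring)
  have huderiv : ∀ t : ℝ, deriv u t =
      2*A*B*((A-B)*(Real.sinh (c*t/m)*(c/m)))/(((A+B)+(A-B)*Real.cosh (c*t/m))^2) :=
    fun t => (hudv t).deriv
  -- evenness
  have heven : ∀ t, u (-t) = u t := by
    intro t
    rw [hu, hu, show c * (-t) / m = -(c * t / m) by ring, Real.cosh_neg]
  -- u 0 = uplus
  have hu0 : u 0 = uplus := by
    rw [hu 0, show c * 0 / m = 0 by simp, Real.cosh_zero,
      show (A + B) + (A - B) * 1 = 2 * A by ring,
      show 2 * A * B = B * (2 * A) by ring,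
      mul_div_assoc, div_self (by positivity), mul_one]
    linarith
  -- bounds
  have hbounds : ∀ t, uplus ≤ u t ∧ u t < 1 := by
    intro t
    constructor
    · rw [hu]
      have h1 : 2 * A * B / ((A + B) + (A - B) * Real.cosh (c * t / m)) ≤ B := by
        rw [div_le_iff₀ (hEpos t)]
        nlinarith [hE2A t]
      linarith
    · rw [hu]
      have h1 : 0 < 2 * A * B / ((A + B) + (A - B) * Real.cosh (c * t / m)) :=
        div_pos (by positivity) (hEpos t)
      linarith
  have hupgt : -1 < uplus := by
    have h := div_pos (show (0:ℝ) < s - 1 by linarith) hγ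
    rw [hup]
    have h2 : -(1 + 1/γ) + s/γ = -1 + (s - 1)/γ := by ring
    linarith
  have hune1 : ∀ t, u t < 1 := fun t => (hbounds t).2
  have hune1' : ∀ t, -1 < u t := fun t => lt_of_lt_of_le hupgt (hbounds t).1
  -- tendsto atTop
  have hcoshT : Tendsto (fun t : ℝ => Real.cosh (c * t / m)) atTop atTop := by
    have h1 : (fun t : ℝ => Real.cosh (c * t / m)) = fun t : ℝ => Real.cosh ((c / m) * t) := by
      funext t; ring_nf
    rw [h1]
    exact my_tendsto_cosh_mul (c / m) (div_ne_zero hcpos.ne' hm0)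
  have hEtop : Tendsto (fun t : ℝ => (A + B) + (A - B) * Real.cosh (c * t / m)) atTop atTop :=
    tendsto_atTop_add_const_left _ _ (hcoshT.const_mul_atTop hABsub)
  have hfr0 : Tendsto (fun t : ℝ => 2 * A * B / ((A + B) + (A - B) * Real.cosh (c * t / m)))
      atTop (nhds 0) := Tendsto.div_atTop tendsto_const_nhds hEtop
  have htop : Tendsto u atTop (nhds 1) := by
    rw [heq]
    have := (tendsto_const_nhds (α := ℝ) (x := (1:ℝ)) (f := atTop)).sub hfr0
    simpa using this
  have hbot : Tendsto u atBot (nhds 1) := by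
    have h := htop.comp tendsto_neg_atBot_atTop
    have h2 : (fun t : ℝ => u (-t)) = u := funext heven
    rwa [show u ∘ Neg.neg = fun t : ℝ => u (-t) from rfl, h2] at h
  -- the first-order ODE
  have hODE : ∀ t, (deriv u t) ^ 2 =
      (γ / m ^ 2) * (1 - u t) ^ 2 * (u t - uminus) * (u t - uplus) := by
    intro t
    have hum' : uminus = 1 - A := by linarith
    have hup' : uplus = 1 - B := by linarith
    rw [huderiv t, hu t, hum', hup']
    exact key_alg γ m A B (Real.cosh (c*t/m)) (Real.sinh (c*t/m)) c hm0 (hEpos t).ne'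
      (by rw [Real.cosh_sq]; ring) hc2
  -- smoothness of θ
  have heqθ : θ = fun t => Real.arccos (u t) := funext hθ
  have hθcd : ContDiff ℝ (⊤ : ℕ∞) θ := by
    rw [heqθ]
    exact contDiff_iff_contDiffAt.2 fun t =>
      (Real.contDiffAt_arccos (hune1' t).ne' (hune1 t).ne).comp t hucd.contDiffAt
  -- energy identity
  have henergy : ∀ t, (1 / 2) * (deriv θ t) ^ 2 + V (θ t) = (2 + γ) / (2 * m ^ 2) := by
    intro t
    have hx : 0 < 1 - (u t) ^ 2 := by
      have h : 1 - (u t) ^ 2 = (1 - u t) * (1 + u t) := by ring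
      rw [h]
      exact mul_pos (by linarith [hune1 t]) (by linarith [hune1' t])
    have hsq : Real.sqrt (1 - u t ^ 2) ^ 2 = 1 - u t ^ 2 := Real.sq_sqrt hx.le
    have hsqne : Real.sqrt (1 - u t ^ 2) ≠ 0 := by positivity
    have hcomp := (Real.hasDerivAt_arccos (hune1' t).ne' (hune1 t).ne).comp t (hudv t)
    have hθderiv : deriv θ t = -(1 / Real.sqrt (1 - u t ^ 2)) * deriv u t := by
      rw [heqθ, (hudv t).deriv]
      exact hcomp.deriv
    have hd2 : (deriv θ t) ^ 2 = (deriv u t) ^ 2 / (1 - u t ^ 2) := by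
      have h : (-(1 / Real.sqrt (1 - u t ^ 2)) * deriv u t) ^ 2
          = (deriv u t) ^ 2 / (Real.sqrt (1 - u t ^ 2)) ^ 2 := by
        field_simp
      rw [hθderiv, h, hsq]
    rw [hd2, hV, hθ t, Real.cos_arccos (by linarith [hune1' t]) (hune1 t).le,
      hODE t, hup, hum]
    exact energy_alg γ m s (u t) hγ0 hm0 hs2
      (by linarith [hune1' t] : (0:ℝ) < 1 + u t).ne'
      (by linarith [hune1 t] : (0:ℝ) < 1 - u t).ne'
  -- θ tendsto
  have hθtop : Tendsto θ atTop (nhds 0) := by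
    have h := (Real.continuous_arccos.tendsto 1).comp htop
    rw [Real.arccos_one] at h
    exact Tendsto.congr (fun t => (hθ t).symm) h
  have hθbot : Tendsto θ atBot (nhds 0) := by
    have h := (Real.continuous_arccos.tendsto 1).comp hbot
    rw [Real.arccos_one] at h
    exact Tendsto.congr (fun t => (hθ t).symm) h
  exact ⟨hucd, heven, hu0, hbounds, htop, hbot, hODE, hθcd, henergy, hθtop, hθbot⟩
end

section
/- Let 0 < m < 2 and set u₀ = m²/2 − 1, and define θ(t) = arccos(u₀ + (1 − u₀) tanh²(√(1−u₀) t/(m√2))) for t ∈ ℝ. Then θ is smooth, even, takes values in (0, π) except θ(0) = arccos u₀, θ(t) → 0 as t → ±∞, and θ satisfies ½(θ'(t))² + (1−cos θ(t))/(2(1+cos θ(t))) + cos θ(t)/m² = 1/m² for all t; i.e. θ is the homoclinic orbit of the inextensible isotropic (Kirchhoff) rod. -/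
open Real Filter

lemma myTanh_contDiff {n : WithTop ℕ∞} : ContDiff ℝ n Real.tanh := by
  have h : Real.tanh = fun x => Real.sinh x / Real.cosh x := funext Real.tanh_eq_sinh_div_cosh
  rw [h]
  exact Real.contDiff_sinh.div Real.contDiff_cosh fun x => (Real.cosh_pos x).ne'

lemma myTanh_hasDerivAt (x : ℝ) : HasDerivAt Real.tanh (1 - Real.tanh x ^ 2) x := by
  have h := (Real.hasDerivAt_sinh x).div (Real.hasDerivAt_cosh x) (Real.cosh_pos x).ne'
  have hfe : (fun y => Real.sinh y / Real.cosh y) = Real.tanh :=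
    (funext Real.tanh_eq_sinh_div_cosh).symm
  rw [show (Real.sinh / Real.cosh) = Real.tanh from hfe] at h
  refine h.congr_deriv ?_
  have hc := (Real.cosh_pos x).ne'
  rw [Real.tanh_eq_sinh_div_cosh]
  field_simp

lemma myTanh_sq_lt_one (x : ℝ) : Real.tanh x ^ 2 < 1 := by
  rw [Real.tanh_eq_sinh_div_cosh, div_pow, div_lt_one (by positivity)]
  nlinarith [Real.cosh_sq_sub_sinh_sq x]

lemma myTendsto_tanh_atTop : Tendsto Real.tanh atTop (nhds 1) := by
  have heq : Real.tanh = fun x => (1 - Real.exp (-(2*x)))/(1 + Real.exp (-(2*x))) := by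
    funext x
    have h1 : Real.exp (-(2*x)) = Real.exp (-x) ^ 2 := by
      rw [show -(2*x) = ((2:ℕ):ℝ) * (-x) by push_cast; ring, Real.exp_nat_mul]
    have hx := Real.exp_pos x
    rw [Real.tanh_eq_sinh_div_cosh, Real.sinh_eq, Real.cosh_eq, h1, Real.exp_neg]
    rw [div_eq_div_iff (by positivity) (by positivity)]
    field_simp
  rw [heq]
  have h0 : Tendsto (fun x : ℝ => Real.exp (-(2*x))) atTop (nhds 0) := by
    apply Real.tendsto_exp_atBot.comp
    exact tendsto_neg_atTop_atBot.comp (tendsto_id.const_mul_atTop two_pos)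
  have hnum : Tendsto (fun x : ℝ => 1 - Real.exp (-(2*x))) atTop (nhds (1 - 0)) :=
    tendsto_const_nhds.sub h0
  have hden : Tendsto (fun x : ℝ => 1 + Real.exp (-(2*x))) atTop (nhds (1 + 0)) :=
    tendsto_const_nhds.add h0
  have := hnum.div hden (by norm_num)
  simpa [Pi.div_def] using this

/-- For `0 < m < 2` and `u₀ = m²/2 − 1`, the function
`θ(t) = arccos(u₀ + (1 − u₀) tanh²(√(1−u₀) t/(m√2)))` is smooth, even, takes values in
`(0, π)` with `θ(0) = arccos u₀`, satisfies `θ(t) → 0` as `t → ±∞`, and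
`½(θ')² + (1−cos θ)/(2(1+cos θ)) + cos θ/m² = 1/m²`; i.e. `θ` is the homoclinic orbit of
the inextensible isotropic (Kirchhoff) rod. -/
theorem homoclinic_solution_kirchhoff_rod (m : ℝ) (hm₀ : 0 < m) (hm₂ : m < 2)
    (u₀ : ℝ) (hu₀ : u₀ = m ^ 2 / 2 - 1)
    (θ : ℝ → ℝ)
    (hθ : ∀ t, θ t = Real.arccos (u₀ + (1 - u₀) *
      (Real.tanh (Real.sqrt (1 - u₀) * t / (m * Real.sqrt 2))) ^ 2)) :
    ContDiff ℝ (⊤ : ℕ∞) θ ∧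
    (∀ t, θ (-t) = θ t) ∧
    (∀ t, θ t ∈ Set.Ioo (0 : ℝ) π) ∧
    θ 0 = Real.arccos u₀ ∧
    Tendsto θ atTop (nhds 0) ∧ Tendsto θ atBot (nhds 0) ∧
    (∀ t, (1 / 2) * (deriv θ t) ^ 2 + (1 - cos (θ t)) / (2 * (1 + cos (θ t)))
      + cos (θ t) / m ^ 2 = 1 / m ^ 2) := by
  have hm : m ≠ 0 := ne_of_gt hm₀
  have hcpos : (0:ℝ) < 1 - u₀ := by rw [hu₀]; nlinarith
  have hu₀gt : (-1:ℝ) < u₀ := by rw [hu₀]; nlinarith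
  have hsq2 : (0:ℝ) < Real.sqrt 2 := Real.sqrt_pos.2 (by norm_num)
  set a : ℝ := Real.sqrt (1 - u₀) / (m * Real.sqrt 2) with ha
  have hapos : 0 < a := div_pos (Real.sqrt_pos.2 hcpos) (mul_pos hm₀ hsq2)
  set u : ℝ → ℝ := fun t => u₀ + (1 - u₀) * Real.tanh (a * t) ^ 2 with hu
  have harg : ∀ t : ℝ, Real.sqrt (1 - u₀) * t / (m * Real.sqrt 2) = a * t := by
    intro t; rw [ha]; ring
  have hθu : ∀ t, θ t = Real.arccos (u t) := by
    intro t; rw [hθ, harg]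
  have hult : ∀ t, u t < 1 := by
    intro t; have := myTanh_sq_lt_one (a * t); simp only [hu]; nlinarith
  have hugt : ∀ t, -1 < u t := by
    intro t; simp only [hu]; nlinarith [sq_nonneg (Real.tanh (a*t))]
  have hcos : ∀ t, Real.cos (θ t) = u t := by
    intro t; rw [hθu t]
    exact Real.cos_arccos (by linarith [hugt t]) (le_of_lt (hult t))
  have hucd : ContDiff ℝ (⊤ : ℕ∞) u := by
    exact contDiff_const.add (contDiff_const.mul
      ((myTanh_contDiff.comp (contDiff_const.mul contDiff_id)).pow 2))
  have hfe : θ = Real.arccos ∘ u := funext hθu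
  have hθcd : ContDiff ℝ (⊤ : ℕ∞) θ := by
    rw [hfe, contDiff_iff_contDiffAt]
    intro t
    exact (Real.contDiffAt_arccos (ne_of_gt (hugt t)) (ne_of_lt (hult t))).comp t
      hucd.contDiffAt
  have heven : ∀ t, θ (-t) = θ t := by
    intro t
    rw [hθu, hθu]
    congr 1
    simp only [hu]
    rw [show a * -t = -(a*t) by ring, Real.tanh_neg]
    ring
  have hIoo : ∀ t, θ t ∈ Set.Ioo (0:ℝ) π := by
    intro t
    rw [hθu]
    refine ⟨Real.arccos_pos.2 (hult t), lt_of_le_of_ne (Real.arccos_le_pi _) fun h => ?_⟩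
    exact absurd (Real.arccos_eq_pi.1 h) (not_le.2 (hugt t))
  have hzero : θ 0 = Real.arccos u₀ := by
    rw [hθu]
    congr 1
    simp [hu]
  have htop : Tendsto θ atTop (nhds 0) := by
    have h1 : Tendsto (fun t : ℝ => a * t) atTop atTop := tendsto_id.const_mul_atTop hapos
    have h2 : Tendsto u atTop (nhds (u₀ + (1 - u₀) * 1 ^ 2)) :=
      tendsto_const_nhds.add (tendsto_const_nhds.mul ((myTendsto_tanh_atTop.comp h1).pow 2))
    rw [hfe]
    have h3 := (Real.continuous_arccos.tendsto (u₀ + (1 - u₀) * 1 ^ 2)).comp h2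
    simpa using h3
  have hbot : Tendsto θ atBot (nhds 0) := by
    have h1 := htop.comp tendsto_neg_atBot_atTop
    have h2 : (θ ∘ fun t : ℝ => -t) = θ := funext heven
    rwa [h2] at h1
  refine ⟨hθcd, heven, hIoo, hzero, htop, hbot, ?_⟩
  intro t
  set s : ℝ := Real.tanh (a * t) with hs
  have hs2 : s ^ 2 < 1 := myTanh_sq_lt_one _
  have hU : HasDerivAt u (2 * (1 - u₀) * s * (1 - s ^ 2) * a) t := by
    have h1 : HasDerivAt (fun x : ℝ => a * x) a t := by
      simpa using (hasDerivAt_id t).const_mul a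
    have h2 := (myTanh_hasDerivAt (a * t)).comp t h1
    have h3 := ((h2.pow 2).const_mul (1 - u₀)).const_add u₀
    refine h3.congr_deriv ?_
    simp only [Function.comp_apply, ← hs]
    push_cast
    ring
  have hθ' : HasDerivAt θ (-(1 / Real.sqrt (1 - u t ^ 2)) *
      (2 * (1 - u₀) * s * (1 - s ^ 2) * a)) t := by
    rw [hfe]
    exact (Real.hasDerivAt_arccos (ne_of_gt (hugt t)) (ne_of_lt (hult t))).comp t hU
  have hP : 0 < 1 - u t ^ 2 := by nlinarith [hugt t, hult t]
  have hsqP : Real.sqrt (1 - u t ^ 2) ^ 2 = 1 - u t ^ 2 := Real.sq_sqrt hP.le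
  have h1u : (0:ℝ) < 1 + u t := by linarith [hugt t]
  have ha2 : a ^ 2 = (1 - u₀) / (2 * m ^ 2) := by
    rw [ha, div_pow, mul_pow, Real.sq_sqrt hcpos.le, Real.sq_sqrt (by norm_num : (0:ℝ) ≤ 2)]
    ring
  rw [hcos t, hθ'.deriv]
  have key : (-(1 / Real.sqrt (1 - u t ^ 2)) * (2 * (1 - u₀) * s * (1 - s ^ 2) * a)) ^ 2
      = (2 * (1 - u₀) * s * (1 - s ^ 2)) ^ 2 * a ^ 2 / (1 - u t ^ 2) := by
    rw [neg_mul, neg_sq, mul_pow, div_pow, one_pow, hsqP, mul_pow]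
    ring
  rw [key, ha2]
  have hut : u t = u₀ + (1 - u₀) * s ^ 2 := rfl
  field_simp
  rw [hut, hu₀]
  ring
end

section
/- Fix m with 0 < m < 2, and for γ > 0 set u_±(γ) = −(1 + 1/γ) ± √(1 + γm²)/γ and k(γ) = (u_+(γ) − u_−(γ))/(1 − u_−(γ)). Then, as γ → 0⁺: u_+(γ) → m²/2 − 1, u_−(γ) → −∞, and k(γ) → 1. Thus in the inextensibility limit the homoclinic data of the extensible rod recover those of the Kirchhoff rod. -/
/-!
Rationalising the numerator, `u_+(γ) = m² / (√(1 + γm²) + 1) - 1`, and multiplying numerator and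
denominator of `k` by `γ`, `k(γ) = 2√(1 + γm²) / (2γ + 1 + √(1 + γm²))`; both expressions are
continuous at `γ = 0`. Meanwhile `u_-(γ) ≤ -1/γ`, which diverges to `-∞`.
-/

open Real Filter Topology

lemma tendsto_sqrt_one_add_mul (c : ℝ) :
    Tendsto (fun γ : ℝ => √(1 + γ * c)) (𝓝 0) (𝓝 1) := by
  have hcont : Continuous fun γ : ℝ => √(1 + γ * c) := by fun_prop
  simpa using hcont.tendsto 0

lemma neg_one_add_one_div_add_sqrt_div_eq {γ c : ℝ} (hγ : γ ≠ 0) (hc : 0 ≤ 1 + γ * c) :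
    -(1 + 1 / γ) + √(1 + γ * c) / γ = c / (√(1 + γ * c) + 1) - 1 := by
  have hsq : √(1 + γ * c) ^ 2 = 1 + γ * c := sq_sqrt hc
  field_simp
  linear_combination hsq

lemma tendsto_neg_one_add_one_div_add_sqrt_div (c : ℝ) :
    Tendsto (fun γ : ℝ => -(1 + 1 / γ) + √(1 + γ * c) / γ) (𝓝[>] 0) (𝓝 (c / 2 - 1)) := by
  have hlim : Tendsto (fun γ : ℝ => c / (√(1 + γ * c) + 1) - 1) (𝓝 0) (𝓝 (c / 2 - 1)) := by
    have hden : Tendsto (fun γ : ℝ => √(1 + γ * c) + 1) (𝓝 0) (𝓝 2) := by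
      simpa [one_add_one_eq_two] using (tendsto_sqrt_one_add_mul c).add_const 1
    exact (tendsto_const_nhds.div hden two_ne_zero).sub_const 1
  have hc : ∀ᶠ γ in 𝓝[>] (0 : ℝ), 0 ≤ 1 + γ * c := by
    have hcont : Continuous fun γ : ℝ => 1 + γ * c := by fun_prop
    have h1 : Tendsto (fun γ : ℝ => 1 + γ * c) (𝓝 0) (𝓝 1) := by simpa using hcont.tendsto 0
    exact (h1.eventually (eventually_ge_nhds zero_lt_one)).filter_mono nhdsWithin_le_nhds
  refine (hlim.mono_left nhdsWithin_le_nhds).congr' ?_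
  filter_upwards [self_mem_nhdsWithin, hc] with γ hγ hcγ
  exact (neg_one_add_one_div_add_sqrt_div_eq (ne_of_gt hγ) hcγ).symm

lemma tendsto_neg_one_add_one_div_sub_sqrt_div (c : ℝ) :
    Tendsto (fun γ : ℝ => -(1 + 1 / γ) - √(1 + γ * c) / γ) (𝓝[>] 0) atBot := by
  have hinv : Tendsto (fun γ : ℝ => -(1 / γ)) (𝓝[>] 0) atBot := by
    have h : Tendsto (fun γ : ℝ => 1 / γ) (𝓝[>] 0) atTop := by
      simpa using tendsto_inv_nhdsGT_zero
    exact tendsto_neg_atBot_iff.mpr h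
  refine tendsto_atBot_mono' _ ?_ hinv
  filter_upwards [self_mem_nhdsWithin] with γ (hγ : 0 < γ)
  have : 0 ≤ √(1 + γ * c) / γ := by positivity
  linarith

lemma homoclinic_modulus_eq {γ s : ℝ} (hγ : γ ≠ 0) :
    ((-(1 + 1 / γ) + s / γ) - (-(1 + 1 / γ) - s / γ)) / (1 - (-(1 + 1 / γ) - s / γ)) =
      2 * s / (2 * γ + 1 + s) := by
  have hnum : (-(1 + 1 / γ) + s / γ) - (-(1 + 1 / γ) - s / γ) = 2 * s / γ := by ring
  have hden : 1 - (-(1 + 1 / γ) - s / γ) = (2 * γ + 1 + s) / γ := by field_simp; ring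
  rw [hnum, hden, div_div_div_cancel_right₀ hγ]

lemma tendsto_two_mul_sqrt_div (c : ℝ) :
    Tendsto (fun γ : ℝ => 2 * √(1 + γ * c) / (2 * γ + 1 + √(1 + γ * c))) (𝓝 0) (𝓝 1) := by
  have hs := tendsto_sqrt_one_add_mul c
  have hden : Tendsto (fun γ : ℝ => 2 * γ + 1 + √(1 + γ * c)) (𝓝 0) (𝓝 2) := by
    simpa [one_add_one_eq_two] using ((tendsto_id.const_mul 2).add_const 1).add hs
  have h := (hs.const_mul 2).div hden two_ne_zero
  rwa [mul_one, div_self two_ne_zero] at h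

theorem inextensible_limit_of_homoclinic_data_general (m : ℝ)
    (uplus uminus k : ℝ → ℝ)
    (hup : ∀ γ, uplus γ = -(1 + 1 / γ) + Real.sqrt (1 + γ * m ^ 2) / γ)
    (hum : ∀ γ, uminus γ = -(1 + 1 / γ) - Real.sqrt (1 + γ * m ^ 2) / γ)
    (hk : ∀ γ, k γ = (uplus γ - uminus γ) / (1 - uminus γ)) :
    Tendsto uplus (nhdsWithin 0 (Set.Ioi 0)) (nhds (m ^ 2 / 2 - 1)) ∧
    Tendsto uminus (nhdsWithin 0 (Set.Ioi 0)) atBot ∧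
    Tendsto k (nhdsWithin 0 (Set.Ioi 0)) (nhds 1) := by
  obtain rfl : uplus = _ := funext hup
  obtain rfl : uminus = _ := funext hum
  refine ⟨tendsto_neg_one_add_one_div_add_sqrt_div _,
    tendsto_neg_one_add_one_div_sub_sqrt_div _, ?_⟩
  refine ((tendsto_two_mul_sqrt_div (m ^ 2)).mono_left nhdsWithin_le_nhds).congr' ?_
  filter_upwards [self_mem_nhdsWithin] with γ (hγ : 0 < γ)
  rw [hk, homoclinic_modulus_eq hγ.ne']

/-- Fix `0 < m < 2`. With `u_±(γ) = −(1 + 1/γ) ± √(1 + γm²)/γ` and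
`k(γ) = (u_+(γ) − u_−(γ))/(1 − u_−(γ))`, one has, as `γ → 0⁺`: `u_+(γ) → m²/2 − 1`,
`u_−(γ) → −∞` and `k(γ) → 1`; in the inextensibility limit the homoclinic data of the
extensible rod recover those of the Kirchhoff rod. -/
theorem inextensible_limit_of_homoclinic_data (m : ℝ) (hm₀ : 0 < m) (hm₂ : m < 2)
    (uplus uminus k : ℝ → ℝ)
    (hup : ∀ γ, uplus γ = -(1 + 1 / γ) + Real.sqrt (1 + γ * m ^ 2) / γ)
    (hum : ∀ γ, uminus γ = -(1 + 1 / γ) - Real.sqrt (1 + γ * m ^ 2) / γ)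
    (hk : ∀ γ, k γ = (uplus γ - uminus γ) / (1 - uminus γ)) :
    Tendsto uplus (nhdsWithin 0 (Set.Ioi 0)) (nhds (m ^ 2 / 2 - 1)) ∧
    Tendsto uminus (nhdsWithin 0 (Set.Ioi 0)) atBot ∧
    Tendsto k (nhdsWithin 0 (Set.Ioi 0)) (nhds 1) :=
  inextensible_limit_of_homoclinic_data_general m uplus uminus k hup hum hk
end

section
/- Let γ > 0 and 0 < m² < 4(1+γ), set u_± = −(1 + 1/γ) ± √(1 + γm²)/γ, A = 1 − u_−, B = 1 − u_+, and let u(t) = 1 − 2AB/((A + B) + (A − B) cosh(√(γAB) t/m)) be the homoclinic solution. Then the frequency ω₀(t) = 1/(1 + u(t)) is well defined and satisfies 1/2 ≤ ω₀(t) ≤ 1/(1 + u_+) for all t ∈ ℝ; in particular ω₀ is bounded and bounded away from zero along the homoclinic orbit. -/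
open Real

/-!
With `s = √(1 + γ m²)` one has `A = 2 + (1 + s)/γ` and `B = 2 + (1 - s)/γ`, and the two
conditions on `m²` say exactly `1 < s < 2γ + 1`, i.e. `0 < B < 2 ≤ A`.  Since `cosh ≥ 1`, the
denominator of the homoclinic profile is at least `2A`, so `1 + u = 2 - 2AB/D` lies in
`[2 - B, 2)`, and `2 - B = 1 + u_+ > 0`.
-/

lemma one_lt_sqrt_one_add_mul {γ x : ℝ} (hγ : 0 < γ) (hx : 0 < x) :
    1 < √(1 + γ * x) := by
  rw [lt_sqrt zero_le_one]
  nlinarith [mul_pos hγ hx]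

lemma sqrt_one_add_mul_lt {γ x : ℝ} (hγ : 0 < γ) (hx : x < 4 * (1 + γ)) :
    √(1 + γ * x) < 2 * γ + 1 := by
  rw [sqrt_lt' (by linarith)]
  nlinarith

lemma two_mul_le_add_add_sub_mul {A B c : ℝ} (hBA : B ≤ A) (hc : 1 ≤ c) :
    2 * A ≤ (A + B) + (A - B) * c := by
  nlinarith

lemma div_add_add_sub_mul_mem_Ioc {A B c : ℝ} (hB : 0 < B) (hBA : B ≤ A) (hc : 1 ≤ c) :
    2 * A * B / ((A + B) + (A - B) * c) ∈ Set.Ioc 0 B := by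
  have hD := two_mul_le_add_add_sub_mul hBA hc
  have hDpos : 0 < (A + B) + (A - B) * c := by linarith
  refine ⟨div_pos (by nlinarith) hDpos, ?_⟩
  rw [div_le_iff₀ hDpos]
  nlinarith

/-- For `γ > 0`, `0 < m² < 4(1+γ)`, roots `u_±`, `A = 1 − u_−`,
`B = 1 − u_+` and the homoclinic solution
`u(t) = 1 − 2AB/((A + B) + (A − B) cosh(√(γAB) t/m))`, the frequency
`ω₀(t) = 1/(1 + u(t))` is well defined and satisfies `1/2 ≤ ω₀(t) ≤ 1/(1 + u_+)` for all
`t`; in particular `ω₀` is bounded and bounded away from zero along the homoclinic orbit. -/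
theorem frequency_bounded_along_homoclinic (γ m : ℝ) (hγ : 0 < γ)
    (hm₁ : 0 < m ^ 2) (hm₂ : m ^ 2 < 4 * (1 + γ))
    (uplus uminus A B : ℝ)
    (hup : uplus = -(1 + 1 / γ) + Real.sqrt (1 + γ * m ^ 2) / γ)
    (hum : uminus = -(1 + 1 / γ) - Real.sqrt (1 + γ * m ^ 2) / γ)
    (hA : A = 1 - uminus) (hB : B = 1 - uplus)
    (u : ℝ → ℝ)
    (hu : ∀ t, u t = 1 - 2 * A * B / ((A + B) + (A - B) * Real.cosh (Real.sqrt (γ * A * B) * t / m)))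
    (ω₀ : ℝ → ℝ) (hω : ∀ t, ω₀ t = 1 / (1 + u t)) :
    ∀ t : ℝ, 0 < 1 + u t ∧ 1 / 2 ≤ ω₀ t ∧ ω₀ t ≤ 1 / (1 + uplus) := by
  intro t
  set s := √(1 + γ * m ^ 2)
  have hs₁ : 1 < s := one_lt_sqrt_one_add_mul hγ hm₁
  have hs₂ : s < 2 * γ + 1 := sqrt_one_add_mul_lt hγ hm₂
  have hB_eq : B = 2 + (1 - s) / γ := by rw [hB, hup]; ring
  have hBA : B ≤ A := by
    rw [hA, hum, hB_eq]; field_simp; linarith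
  have hB_pos : 0 < B := by
    rw [hB_eq, ← sub_lt_iff_lt_add', zero_sub, lt_div_iff₀ hγ]; linarith
  have hB_lt : B < 2 := by
    rw [hB_eq, add_lt_iff_neg_left]; exact div_neg_of_neg_of_pos (by linarith) hγ
  obtain ⟨hf_pos, hf_le⟩ := div_add_add_sub_mul_mem_Ioc hB_pos hBA
    (one_le_cosh (√(γ * A * B) * t / m))
  have h1u : 1 + u t = 2 - 2 * A * B / ((A + B) + (A - B) * cosh (√(γ * A * B) * t / m)) := by
    rw [hu t]; ring
  have h1up : 1 + uplus = 2 - B := by rw [hB]; ring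
  have hpos : 0 < 1 + u t := by rw [h1u]; linarith
  refine ⟨hpos, ?_, ?_⟩ <;> rw [hω t]
  · exact one_div_le_one_div_of_le hpos (by rw [h1u]; linarith)
  · exact one_div_le_one_div_of_le (by rw [h1up]; linarith) (by rw [h1u, h1up]; linarith)
end

section
/- Let γ > 0 and 0 < m² < 4(1+γ), and set u_± = −(1 + 1/γ) ± √(1 + γm²)/γ and h = (2+γ)/(2m²). Then for all θ ∈ (0, π), with u = cos θ, one has the factorization h − V(θ) = γ(1 − u)(u − u_−)(u − u_+)/(2m²(1 + u)). In particular, h − V(θ) > 0 exactly when u_+ < cos θ < 1, and along any solution with energy h the equation ½(θ')² = h − V(θ) is equivalent to (u')² = (γ/m²)(1 − u)²(u − u_−)(u − u_+). -/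
/-!
With `u = cos θ`, clearing the denominator `2m²(1 + u)` turns `h − V` into
`(1 − u)(γu² + 2(1 + γ)u + γ + 2 − m²)`, and the quadratic factor is `γ(u − u₋)(u − u₊)`
because `u_±` are its roots. Since `u₋ < −1 < u < 1`, the sign of `h − V` is that of `u − u₊`.
Along a trajectory `u' = −sin θ · θ'`, so `(u')² = (1 − u²)(θ')²`, and the two energy equations
differ by the nonzero factor `2(1 − u)`.
-/

open Real

lemma neg_one_lt_cos_and_cos_lt_one {θ : ℝ} (hθ : θ ∈ Set.Ioo 0 π) : -1 < cos θ ∧ cos θ < 1 := by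
  have hsin : 0 < sin θ := sin_pos_of_pos_of_lt_pi hθ.1 hθ.2
  have hcos_sq : cos θ ^ 2 < 1 := by nlinarith [sin_sq_add_cos_sq θ]
  exact ⟨by nlinarith, by nlinarith⟩

lemma mul_sub_root_mul_sub_root {γ m : ℝ} (hγ : γ ≠ 0) (hdisc : 0 ≤ 1 + γ * m ^ 2) (u : ℝ) :
    γ * (u - (-(1 + 1 / γ) - √(1 + γ * m ^ 2) / γ)) * (u - (-(1 + 1 / γ) + √(1 + γ * m ^ 2) / γ))
      = γ * u ^ 2 + 2 * (1 + γ) * u + γ + 2 - m ^ 2 := by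
  have hs := sq_sqrt hdisc
  field_simp
  linear_combination -hs

lemma homoclinic_energy_sub_potential {γ m u : ℝ} (hm : m ≠ 0) (hu : 1 + u ≠ 0) :
    (2 + γ) / (2 * m ^ 2) - ((1 - u) / (2 * (1 + u)) + u / m ^ 2 + γ * u ^ 2 / (2 * m ^ 2))
      = (1 - u) * (γ * u ^ 2 + 2 * (1 + γ) * u + γ + 2 - m ^ 2) / (2 * m ^ 2 * (1 + u)) := by
  field_simp
  ring

lemma root_lt_neg_one {γ m : ℝ} (hγ : 0 < γ) : -(1 + 1 / γ) - √(1 + γ * m ^ 2) / γ < -1 := by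
  have : 0 < 1 / γ + √(1 + γ * m ^ 2) / γ := by positivity
  linarith

lemma sq_deriv_cos_comp {θ : ℝ → ℝ} {t : ℝ} (hθ : DifferentiableAt ℝ θ t) :
    deriv (fun s => cos (θ s)) t ^ 2 = (1 - cos (θ t) ^ 2) * deriv θ t ^ 2 := by
  rw [hθ.hasDerivAt.cos.deriv, ← sin_sq]
  ring

lemma half_sq_eq_div_iff {w u a b c m : ℝ} (hu₁ : -1 < u) (hu₂ : u < 1) :
    1 / 2 * w ^ 2 = c * (1 - u) * a * b / (2 * m ^ 2 * (1 + u)) ↔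
      (1 - u ^ 2) * w ^ 2 = c / m ^ 2 * (1 - u) ^ 2 * a * b := by
  have h1u : 1 - u ≠ 0 := by linarith
  have h1u' : 1 + u ≠ 0 := by linarith
  rw [show (1 - u ^ 2) * w ^ 2 = (1 - u) * ((1 + u) * w ^ 2) by ring,
    show c / m ^ 2 * (1 - u) ^ 2 * a * b = (1 - u) * (c * (1 - u) * a * b / m ^ 2) by ring,
    mul_right_inj' h1u]
  constructor <;> intro h <;> field_simp at h ⊢ <;> linarith

theorem energy_factorization_general (γ m : ℝ) (hγ : 0 < γ)
    (hm₁ : 0 < m ^ 2)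
    (uplus uminus h : ℝ)
    (hup : uplus = -(1 + 1 / γ) + Real.sqrt (1 + γ * m ^ 2) / γ)
    (hum : uminus = -(1 + 1 / γ) - Real.sqrt (1 + γ * m ^ 2) / γ)
    (hh : h = (2 + γ) / (2 * m ^ 2))
    (V : ℝ → ℝ)
    (hV : ∀ θ, V θ = (1 - cos θ) / (2 * (1 + cos θ)) + cos θ / m ^ 2
      + γ * (cos θ) ^ 2 / (2 * m ^ 2)) :
    (∀ θ ∈ Set.Ioo (0 : ℝ) π,
      h - V θ = γ * (1 - cos θ) * (cos θ - uminus) * (cos θ - uplus)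
        / (2 * m ^ 2 * (1 + cos θ))) ∧
    (∀ θ ∈ Set.Ioo (0 : ℝ) π,
      (0 < h - V θ ↔ uplus < cos θ ∧ cos θ < 1)) ∧
    (∀ θ : ℝ → ℝ, Differentiable ℝ θ → (∀ t, θ t ∈ Set.Ioo (0 : ℝ) π) →
      ∀ t : ℝ,
        ((1 / 2) * (deriv θ t) ^ 2 = h - V (θ t) ↔
          (deriv (fun s => cos (θ s)) t) ^ 2 =
            (γ / m ^ 2) * (1 - cos (θ t)) ^ 2 * (cos (θ t) - uminus) * (cos (θ t) - uplus))) := by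
  have factor : ∀ θ ∈ Set.Ioo (0 : ℝ) π,
      h - V θ = γ * (1 - cos θ) * (cos θ - uminus) * (cos θ - uplus)
        / (2 * m ^ 2 * (1 + cos θ)) := by
    intro θ hθ
    have hcos := neg_one_lt_cos_and_cos_lt_one hθ
    rw [hh, hV, homoclinic_energy_sub_potential (by rintro rfl; simp at hm₁) (by linarith),
      ← mul_sub_root_mul_sub_root hγ.ne' (by positivity), hup, hum]
    ring
  refine ⟨factor, fun θ hθ => ?_, fun θ hθ hθmem t => ?_⟩
  · obtain ⟨hcos₁, hcos₂⟩ := neg_one_lt_cos_and_cos_lt_one hθ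
    have hcoef : 0 < γ * (1 - cos θ) * (cos θ - uminus) := by
      have := hum ▸ root_lt_neg_one (m := m) hγ
      have : 0 < 1 - cos θ := by linarith
      have : 0 < cos θ - uminus := by linarith
      positivity
    have hden : 0 < 2 * m ^ 2 * (1 + cos θ) := mul_pos (by positivity) (by linarith)
    rw [factor θ hθ, div_pos_iff_of_pos_right hden, mul_pos_iff_of_pos_left hcoef, sub_pos]
    exact (and_iff_left hcos₂).symm
  · obtain ⟨hcos₁, hcos₂⟩ := neg_one_lt_cos_and_cos_lt_one (hθmem t)
    rw [factor _ (hθmem t), sq_deriv_cos_comp hθ.differentiableAt]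
    exact half_sq_eq_div_iff hcos₁ hcos₂

/-- For `γ > 0`, `0 < m² < 4(1+γ)`, roots `u_±` and homoclinic energy
`h = (2+γ)/(2m²)`: for all `θ ∈ (0, π)`, with `u = cos θ`, one has the factorization
`h − V(θ) = γ(1 − u)(u − u_−)(u − u_+)/(2m²(1 + u))`; in particular `h − V(θ) > 0` exactly
when `u_+ < cos θ < 1`, and along any solution with energy `h` the equation
`½(θ')² = h − V(θ)` is equivalent to `(u')² = (γ/m²)(1 − u)²(u − u_−)(u − u_+)`. -/
theorem energy_factorization (γ m : ℝ) (hγ : 0 < γ)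
    (hm₁ : 0 < m ^ 2) (hm₂ : m ^ 2 < 4 * (1 + γ))
    (uplus uminus h : ℝ)
    (hup : uplus = -(1 + 1 / γ) + Real.sqrt (1 + γ * m ^ 2) / γ)
    (hum : uminus = -(1 + 1 / γ) - Real.sqrt (1 + γ * m ^ 2) / γ)
    (hh : h = (2 + γ) / (2 * m ^ 2))
    (V : ℝ → ℝ)
    (hV : ∀ θ, V θ = (1 - cos θ) / (2 * (1 + cos θ)) + cos θ / m ^ 2
      + γ * (cos θ) ^ 2 / (2 * m ^ 2)) :
    (∀ θ ∈ Set.Ioo (0 : ℝ) π,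
      h - V θ = γ * (1 - cos θ) * (cos θ - uminus) * (cos θ - uplus)
        / (2 * m ^ 2 * (1 + cos θ))) ∧
    (∀ θ ∈ Set.Ioo (0 : ℝ) π,
      (0 < h - V θ ↔ uplus < cos θ ∧ cos θ < 1)) ∧
    (∀ θ : ℝ → ℝ, Differentiable ℝ θ → (∀ t, θ t ∈ Set.Ioo (0 : ℝ) π) →
      ∀ t : ℝ,
        ((1 / 2) * (deriv θ t) ^ 2 = h - V (θ t) ↔
          (deriv (fun s => cos (θ s)) t) ^ 2 =
            (γ / m ^ 2) * (1 - cos (θ t)) ^ 2 * (cos (θ t) - uminus) * (cos (θ t) - uplus))) :=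
  energy_factorization_general γ m hγ hm₁ uplus uminus h hup hum hh V hV
end
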